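/- arXiv:1310.0865 — 2 statements merged into one kernel-verified Lean document; each statement's English description precedes it below -/
import Mathlib

section
/- Let y ∈ ℝ^n, X ∈ ℝ^{n×p}, μ > 0, and f(θ) = ‖y − Xθ‖₂² + μ‖θ‖₂. If θ* ≠ 0 minimizes f, then θ* satisfies (XᵀX + (μ/(2‖θ*‖₂)) I) θ* = Xᵀy, and consequently ‖Xᵀy‖₂ > μ/2. -/
open Matrix

noncomputable def euclidNorm {ι : Type*} [Fintype ι] (v : ι → ℝ) : ℝ :=
  Real.sqrt (∑ i, (v i) ^ 2)

/-!
Away from `0` the objective `f θ = ‖y - A θ‖² + μ ‖θ‖` is differentiable, with derivative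
`v ↦ 2 ⟪A θ - y, A v⟫ + (μ / ‖θ‖) ⟪θ, v⟫`; at a minimizer it vanishes, which is the normal
equation `A† A θ + (μ / (2 ‖θ‖)) θ = A† y`.

The normal equation alone only gives `μ / 2 ≤ ‖A† y‖` (with equality when `A θ = 0`).
Strictness comes from comparing with `f 0 = ‖y‖²`: this gives `μ ‖θ‖ + ‖A θ‖² ≤ 2 ⟪y, A θ⟫`,
so `A θ ≠ 0` and `μ ‖θ‖ < 2 ⟪A† y, θ⟫ ≤ 2 ‖A† y‖ ‖θ‖`.
-/

open scoped RealInnerProductSpace InnerProduct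

section InnerProductSpace

variable {E F : Type*} [NormedAddCommGroup E] [InnerProductSpace ℝ E]
  [NormedAddCommGroup F] [InnerProductSpace ℝ F]

theorem hasFDerivAt_norm {x : E} (hx : x ≠ 0) :
    HasFDerivAt (‖·‖) (‖x‖⁻¹ • innerSL ℝ x) x := by
  have h := (hasStrictFDerivAt_norm_sq x).hasFDerivAt.sqrt (by positivity)
  simp only [Real.sqrt_sq (norm_nonneg _)] at h
  convert h using 1
  ext v
  simp only [_root_.smul_apply, coe_innerSL_apply, smul_eq_mul, nsmul_eq_mul,
    Nat.cast_ofNat]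
  field_simp

noncomputable def penalizedLeastSquares (A : E →L[ℝ] F) (y : F) (μ : ℝ) (θ : E) : ℝ :=
  ‖y - A θ‖ ^ 2 + μ * ‖θ‖

variable (A : E →L[ℝ] F) (y : F) {μ : ℝ} {θ : E}

theorem hasFDerivAt_penalizedLeastSquares (hθ : θ ≠ 0) :
    HasFDerivAt (penalizedLeastSquares A y μ)
      ((2 : ℕ) • (innerSL ℝ (y - A θ)).comp (-A) + μ • ‖θ‖⁻¹ • innerSL ℝ θ) θ :=
  (A.hasFDerivAt.const_sub y).norm_sq.add ((hasFDerivAt_norm hθ).const_mul μ)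

theorem inner_add_inner_eq_zero_of_isLocalMin (hθ : θ ≠ 0)
    (h : IsLocalMin (penalizedLeastSquares A y μ) θ) (v : E) :
    ⟪A θ - y, A v⟫ + μ / (2 * ‖θ‖) * ⟪θ, v⟫ = 0 := by
  have hv := congr($(h.hasFDerivAt_eq_zero (hasFDerivAt_penalizedLeastSquares A y hθ)) v)
  simp only [map_sub, ContinuousLinearMap.comp_neg, ContinuousLinearMap.sub_comp, neg_sub,
    _root_.add_apply, _root_.smul_apply, _root_.sub_apply,
    ContinuousLinearMap.comp_apply, coe_innerSL_apply, nsmul_eq_mul, Nat.cast_ofNat, smul_eq_mul,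
    _root_.zero_apply] at hv
  rw [inner_sub_left]
  linear_combination hv / 2

theorem mul_norm_lt_two_mul_inner_of_le_apply_zero (hμ : 0 < μ) (hθ : θ ≠ 0)
    (h : penalizedLeastSquares A y μ θ ≤ penalizedLeastSquares A y μ 0) :
    μ * ‖θ‖ < 2 * ⟪y, A θ⟫ := by
  have hpos : 0 < μ * ‖θ‖ := by positivity
  simp only [penalizedLeastSquares, norm_sub_sq_real, map_zero, sub_zero, norm_zero, mul_zero,
    add_zero] at h
  rcases eq_or_ne (A θ) 0 with hAθ | hAθ
  · simp only [hAθ, inner_zero_right, norm_zero] at h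
    linarith
  · have := norm_pos_iff.2 hAθ
    nlinarith

variable [CompleteSpace E] [CompleteSpace F]

theorem adjoint_apply_add_smul_eq_of_isLocalMin (hθ : θ ≠ 0)
    (h : IsLocalMin (penalizedLeastSquares A y μ) θ) :
    (A†) (A θ) + (μ / (2 * ‖θ‖)) • θ = (A†) y := by
  refine ext_inner_right ℝ fun v => ?_
  have hv := inner_add_inner_eq_zero_of_isLocalMin A y hθ h v
  rw [inner_sub_left] at hv
  rw [inner_add_left, real_inner_smul_left, ContinuousLinearMap.adjoint_inner_left,
    ContinuousLinearMap.adjoint_inner_left]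
  linarith

theorem half_lt_norm_adjoint_apply_of_le_apply_zero (hμ : 0 < μ) (hθ : θ ≠ 0)
    (h : penalizedLeastSquares A y μ θ ≤ penalizedLeastSquares A y μ 0) :
    μ / 2 < ‖(A†) y‖ := by
  have hlt := mul_norm_lt_two_mul_inner_of_le_apply_zero A y hμ hθ h
  rw [← ContinuousLinearMap.adjoint_inner_left] at hlt
  have hθpos := norm_pos_iff.2 hθ
  have hcs := real_inner_le_norm ((A†) y) θ
  nlinarith

end InnerProductSpace

theorem euclidNorm_eq_norm_toLp {ι : Type*} [Fintype ι] (v : ι → ℝ) :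
    euclidNorm v = ‖WithLp.toLp 2 v‖ := by
  simp [euclidNorm, EuclideanSpace.norm_eq]

theorem Matrix.adjoint_toContinuousLinearMap_toEuclideanLin {𝕜 m n : Type*} [RCLike 𝕜]
    [Fintype m] [DecidableEq m] [Fintype n] [DecidableEq n] (X : Matrix m n 𝕜) :
    (toEuclideanLin X).toContinuousLinearMap† = (toEuclideanLin Xᴴ).toContinuousLinearMap := by
  rw [← LinearMap.adjoint_toContinuousLinearMap, toEuclideanLin_conjTranspose_eq_adjoint]

theorem penalizedLeastSquares_toEuclideanLin {m n : Type*} [Fintype m] [Fintype n]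
    [DecidableEq n] (X : Matrix m n ℝ) (y : m → ℝ) (μ : ℝ) (θ : n → ℝ) :
    penalizedLeastSquares (toEuclideanLin X).toContinuousLinearMap (WithLp.toLp 2 y) μ
        (WithLp.toLp 2 θ) =
      euclidNorm (y - X *ᵥ θ) ^ 2 + μ * euclidNorm θ := by
  simp only [penalizedLeastSquares, LinearMap.coe_toContinuousLinearMap', toLpLin_toLp,
    toLin'_apply, euclidNorm_eq_norm_toLp, WithLp.toLp_sub]

/-- A nonzero minimizer `θ*` of `‖y - Xθ‖₂² + μ‖θ‖₂` satisfies the normal equation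
`(XᵀX + (μ/(2‖θ*‖₂)) I) θ* = Xᵀ y`, and consequently `‖Xᵀy‖₂ > μ/2`. -/
theorem nonzero_minimizer_normal_equation {n p : ℕ} (y : Fin n → ℝ)
    (X : Matrix (Fin n) (Fin p) ℝ) (μ : ℝ) (hμ : 0 < μ)
    (θs : Fin p → ℝ) (hne : θs ≠ 0)
    (hmin : ∀ θ : Fin p → ℝ,
      euclidNorm (y - X.mulVec θs) ^ 2 + μ * euclidNorm θs ≤
        euclidNorm (y - X.mulVec θ) ^ 2 + μ * euclidNorm θ) :
    (Xᵀ * X).mulVec θs + (μ / (2 * euclidNorm θs)) • θs = Xᵀ.mulVec y ∧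
      μ / 2 < euclidNorm (Xᵀ.mulVec y) := by
  set A := (toEuclideanLin X).toContinuousLinearMap
  have hθ : WithLp.toLp 2 θs ≠ 0 := by simpa using hne
  have hglobal : ∀ θ, penalizedLeastSquares A (WithLp.toLp 2 y) μ (WithLp.toLp 2 θs) ≤
      penalizedLeastSquares A (WithLp.toLp 2 y) μ θ := by
    intro θ
    obtain ⟨θ, rfl⟩ := WithLp.toLp_surjective 2 θ
    simpa only [A, penalizedLeastSquares_toEuclideanLin] using hmin θ
  have hadj : A† = (toEuclideanLin Xᵀ).toContinuousLinearMap := by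
    rw [adjoint_toContinuousLinearMap_toEuclideanLin, conjTranspose_eq_transpose_of_trivial]
  constructor
  · have hnormal := adjoint_apply_add_smul_eq_of_isLocalMin A _ hθ (.of_forall hglobal)
    rw [hadj] at hnormal
    simpa [A, ← euclidNorm_eq_norm_toLp] using congr(WithLp.ofLp $hnormal)
  · have hbound := half_lt_norm_adjoint_apply_of_le_apply_zero A _ hμ hθ (hglobal 0)
    simpa [hadj, A, euclidNorm_eq_norm_toLp] using hbound
end

section
/- Let A ∈ ℝ^{d₁×d₃}, B ∈ ℝ^{d₁×d₁} positive definite, C ∈ ℝ^{d₃×d₂}, and μ > 0. If ‖B^{1/2} A C‖_F ≤ μ/2, then X = 0 is a global minimizer of F(X) = ‖A − B X Cᵀ‖_F² + μ √(tr(Xᵀ B X)) over X ∈ ℝ^{d₁×d₂}. -/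
open Matrix

noncomputable def frob {m n : Type*} [Fintype m] [Fintype n] (M : Matrix m n ℝ) : ℝ :=
  Real.sqrt (∑ i, ∑ j, (M i j) ^ 2)

open scoped ComplexOrder in
/-- The positive semidefinite square root of a positive semidefinite matrix
(the definition `Matrix.PosSemidef.sqrt` of the older Mathlib, since removed). -/
noncomputable def Matrix.PosSemidef.sqrt {n 𝕜 : Type*} [Fintype n] [DecidableEq n] [RCLike 𝕜]
    {A : Matrix n n 𝕜} (hA : A.PosSemidef) : Matrix n n 𝕜 :=
  hA.1.eigenvectorUnitary.1 * diagonal ((↑) ∘ (√·) ∘ hA.1.eigenvalues) *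
  (star hA.1.eigenvectorUnitary : Matrix n n 𝕜)

/-!
Write `B = S * S` with `S = B^{1/2}` symmetric, so that `tr(Xᵀ B X) = ‖S X‖_F²`. Expanding the
square, `F(X) - F(0) = ‖B X Cᵀ‖_F² - 2 tr(Aᵀ B X Cᵀ) + μ ‖S X‖_F`, and the cross term is the
Frobenius inner product of `S A C` and `S X`, which Cauchy–Schwarz bounds by
`‖S A C‖_F ‖S X‖_F ≤ (μ/2) ‖S X‖_F`.
-/

open scoped InnerProductSpace ComplexOrder

section Frobenius

variable {m n : Type*} [Fintype m] [Fintype n]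

theorem frob_eq_norm_vec (M : Matrix m n ℝ) : frob M = ‖WithLp.toLp 2 M.vec‖ := by
  rw [EuclideanSpace.norm_eq, frob, Fintype.sum_prod_type, Finset.sum_comm]
  simp [vec]

theorem trace_transpose_mul_eq_inner_vec (P Q : Matrix m n ℝ) :
    (Pᵀ * Q).trace = ⟪WithLp.toLp 2 P.vec, WithLp.toLp 2 Q.vec⟫_ℝ := by
  rw [← vec_dotProduct_vec, EuclideanSpace.inner_eq_star_dotProduct]
  simp [dotProduct_comm]

theorem frob_nonneg (M : Matrix m n ℝ) : 0 ≤ frob M := Real.sqrt_nonneg _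

theorem trace_transpose_mul_self_eq_frob_sq (M : Matrix m n ℝ) :
    (Mᵀ * M).trace = frob M ^ 2 := by
  rw [trace_transpose_mul_eq_inner_vec, frob_eq_norm_vec, real_inner_self_eq_norm_sq]

theorem trace_transpose_mul_le_frob_mul_frob (P Q : Matrix m n ℝ) :
    (Pᵀ * Q).trace ≤ frob P * frob Q := by
  rw [trace_transpose_mul_eq_inner_vec, frob_eq_norm_vec, frob_eq_norm_vec]
  exact real_inner_le_norm _ _

theorem frob_sub_sq (P Q : Matrix m n ℝ) :
    frob (P - Q) ^ 2 = frob P ^ 2 - 2 * (Pᵀ * Q).trace + frob Q ^ 2 := by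
  simp only [frob_eq_norm_vec, trace_transpose_mul_eq_inner_vec, vec_sub, WithLp.toLp_sub]
  exact norm_sub_sq_real _ _

end Frobenius

namespace Matrix.PosSemidef

variable {n 𝕜 : Type*} [Fintype n] [DecidableEq n] [RCLike 𝕜] {A : Matrix n n 𝕜}

theorem sqrt_eq_cfc (hA : A.PosSemidef) : hA.sqrt = cfc Real.sqrt A :=
  (hA.1.cfc_eq _).symm

theorem sqrt_mul_self (hA : A.PosSemidef) : hA.sqrt * hA.sqrt = A := by
  rw [sqrt_eq_cfc, ← cfc_mul Real.sqrt Real.sqrt A]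
  conv_rhs => rw [← cfc_id' ℝ A hA.1.isSelfAdjoint]
  refine cfc_congr fun x hx => ?_
  rw [hA.1.spectrum_real_eq_range_eigenvalues] at hx
  obtain ⟨i, rfl⟩ := hx
  exact Real.mul_self_sqrt (hA.eigenvalues_nonneg i)

theorem conjTranspose_sqrt (hA : A.PosSemidef) : hA.sqrtᴴ = hA.sqrt := by
  rw [sqrt_eq_cfc]
  exact (cfc_predicate Real.sqrt A).star_eq

end Matrix.PosSemidef

section Conjugation

variable {m n p : Type*} [Fintype m] {R : Type*} [CommRing R]

theorem trace_transpose_mul_mul_self_mul_mul_transpose [Fintype n] [Fintype p]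
    (S : Matrix m m R) (hS : Sᵀ = S) (A : Matrix m n R) (X : Matrix m p R) (C : Matrix n p R) :
    (Aᵀ * (S * S * X * Cᵀ)).trace = ((S * A * C)ᵀ * (S * X)).trace := by
  rw [transpose_mul, transpose_mul, hS]
  simp only [Matrix.mul_assoc]
  rw [trace_mul_comm Cᵀ]
  simp only [Matrix.mul_assoc]

theorem transpose_mul_mul_self_mul (S : Matrix m m R) (hS : Sᵀ = S) (X : Matrix m n R) :
    Xᵀ * (S * S) * X = (S * X)ᵀ * (S * X) := by
  rw [transpose_mul, hS]
  simp only [Matrix.mul_assoc]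

end Conjugation

theorem zero_minimizes_canonical_general {d₁ d₂ d₃ : ℕ} (A : Matrix (Fin d₁) (Fin d₃) ℝ)
    (B : Matrix (Fin d₁) (Fin d₁) ℝ) (hB : B.PosDef)
    (C : Matrix (Fin d₃) (Fin d₂) ℝ) (μ : ℝ)
    (h : frob (hB.posSemidef.sqrt * A * C) ≤ μ / 2) :
    ∀ X : Matrix (Fin d₁) (Fin d₂) ℝ,
      frob (A - B * (0 : Matrix (Fin d₁) (Fin d₂) ℝ) * Cᵀ) ^ 2 +
          μ * Real.sqrt (Matrix.trace ((0 : Matrix (Fin d₁) (Fin d₂) ℝ)ᵀ * B * (0 : Matrix (Fin d₁) (Fin d₂) ℝ))) ≤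
        frob (A - B * X * Cᵀ) ^ 2 + μ * Real.sqrt (Matrix.trace (Xᵀ * B * X)) := by
  intro X
  set S := hB.posSemidef.sqrt
  have hSt : Sᵀ = S := by
    rw [← conjTranspose_eq_transpose_of_trivial]
    exact hB.posSemidef.conjTranspose_sqrt
  have hSS : S * S = B := hB.posSemidef.sqrt_mul_self
  have hcross : (Aᵀ * (B * X * Cᵀ)).trace ≤ μ / 2 * frob (S * X) := calc
    _ = ((S * A * C)ᵀ * (S * X)).trace := by
      rw [← hSS, trace_transpose_mul_mul_self_mul_mul_transpose S hSt]
    _ ≤ frob (S * A * C) * frob (S * X) := trace_transpose_mul_le_frob_mul_frob _ _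
    _ ≤ μ / 2 * frob (S * X) := mul_le_mul_of_nonneg_right h (frob_nonneg _)
  have hreg : (Xᵀ * B * X).trace = frob (S * X) ^ 2 := by
    rw [← hSS, transpose_mul_mul_self_mul S hSt, trace_transpose_mul_self_eq_frob_sq]
  simp only [Matrix.mul_zero, Matrix.zero_mul, sub_zero, trace_zero, Real.sqrt_zero, mul_zero,
    add_zero]
  rw [hreg, Real.sqrt_sq (frob_nonneg _), frob_sub_sq]
  linarith [sq_nonneg (frob (B * X * Cᵀ))]

/-- If `‖B^{1/2} A C‖_F ≤ μ/2`, then `X = 0` globally minimizes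
`‖A - B X Cᵀ‖_F² + μ √(tr(Xᵀ B X))`. -/
theorem zero_minimizes_canonical {d₁ d₂ d₃ : ℕ} (A : Matrix (Fin d₁) (Fin d₃) ℝ)
    (B : Matrix (Fin d₁) (Fin d₁) ℝ) (hB : B.PosDef)
    (C : Matrix (Fin d₃) (Fin d₂) ℝ) (μ : ℝ) (hμ : 0 < μ)
    (h : frob (hB.posSemidef.sqrt * A * C) ≤ μ / 2) :
    ∀ X : Matrix (Fin d₁) (Fin d₂) ℝ,
      frob (A - B * (0 : Matrix (Fin d₁) (Fin d₂) ℝ) * Cᵀ) ^ 2 +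
          μ * Real.sqrt (Matrix.trace ((0 : Matrix (Fin d₁) (Fin d₂) ℝ)ᵀ * B * (0 : Matrix (Fin d₁) (Fin d₂) ℝ))) ≤
        frob (A - B * X * Cᵀ) ^ 2 + μ * Real.sqrt (Matrix.trace (Xᵀ * B * X)) :=
  zero_minimizes_canonical_general A B hB C μ h
end
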